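/- Fix real numbers t₀ < t₁ and smooth fields x, y, θ : ℝ × [0,ℓ] → ℝ satisfying the rolling constraints ẋ + R θ̇ y′ = 0 and ẏ − R θ̇ x′ = 0 on ℝ × [0,ℓ]. Consider the Lagrangian density L = (ρ/2)(ẋ² + ẏ²) + (α/2)θ̇² − (β/2)(θ′)² − (K/2)((x″)² + (y″)²) and the action S = ∫_{t₀}^{t₁} ∫₀^ℓ L dt ds. Then the following are equivalent: (i) for every smooth variation (V_x, V_y, V_θ) with compact support contained in (t₀, t₁) × (0, ℓ) satisfying the admissibility conditions V_x + R y′ V_θ = 0 and V_y − R x′ V_θ = 0 pointwise along (x, y, θ), the derivative at ε = 0 of ε ↦ S(x + εV_x, y + εV_y, θ + εV_θ) vanishes; (ii) there exist smooth multipliers λ, μ : (t₀, t₁) × (0, ℓ) → ℝ such that ρẍ + Kx⁗ = λ, ρÿ + Ky⁗ = μ, and αθ̈ − βθ″ = R(λ y′ − μ x′) hold on (t₀, t₁) × (0, ℓ). -/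

import Mathlib

/-!
The Lagrangian density is a quadratic form in the fields, so along `x + εVx, y + εVy, θ + εVθ`
the action is a quadratic polynomial in `ε`; its derivative at `0` is the integral of the polarised
density `δL`. Pointwise, `δL + Fₓ Vx + F_y Vy + T Vθ = ∂ₜP + ∂ₛQ` with `Fₓ = ρẍ + Kx⁗`,
`F_y = ρÿ + Ky⁗`, `T = αθ̈ - βθ″` and currents `P`, `Q` that vanish on the boundary of the
rectangle, so the first variation is `-∫∫ (Fₓ Vx + F_y Vy + T Vθ)`. An admissible variation has
`Vx = -R y′ Vθ` and `Vy = R x′ Vθ`, which turns this into `-∫∫ r Vθ` with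
`r = T - R (Fₓ y′ - F_y x′)`. By the fundamental lemma of the calculus of variations,
stationarity is therefore equivalent to `r = 0` on the open rectangle, i.e. to the field
equations with the multipliers `λ = Fₓ`, `μ = F_y`, which the first two equations force anyway.
-/

open MeasureTheory

/-- Partial derivative with respect to the first (time) variable. -/
noncomputable def pt (f : ℝ → ℝ → ℝ) : ℝ → ℝ → ℝ := fun t s => deriv (fun τ => f τ s) t

/-- Partial derivative with respect to the second (arclength) variable. -/
noncomputable def ps (f : ℝ → ℝ → ℝ) : ℝ → ℝ → ℝ := fun t s => deriv (fun σ => f t σ) s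

/-- Smoothness of a field of two real variables. -/
def Smooth2 (f : ℝ → ℝ → ℝ) : Prop := ContDiff ℝ (⊤ : ℕ∞) (fun p : ℝ × ℝ => f p.1 p.2)

/-- Energy density of the planar Cosserat rod. -/
noncomputable def Edens (ρ α β K : ℝ) (x y θ : ℝ → ℝ → ℝ) : ℝ → ℝ → ℝ := fun t s =>
  ρ / 2 * ((pt x t s) ^ 2 + (pt y t s) ^ 2) + α / 2 * (pt θ t s) ^ 2
    + K / 2 * ((ps (ps x) t s) ^ 2 + (ps (ps y) t s) ^ 2) + β / 2 * (ps θ t s) ^ 2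

/-- Lagrangian density of the simplified nonholonomic planar Cosserat rod
(no inextensibility term). -/
noncomputable def rodLagNH (ρ α β K : ℝ) (x y θ : ℝ → ℝ → ℝ) : ℝ → ℝ → ℝ := fun t s =>
  ρ / 2 * ((pt x t s) ^ 2 + (pt y t s) ^ 2) + α / 2 * (pt θ t s) ^ 2
    - β / 2 * (ps θ t s) ^ 2 - K / 2 * ((ps (ps x) t s) ^ 2 + (ps (ps y) t s) ^ 2)


open Set

variable {f V : ℝ → ℝ → ℝ}

theorem Smooth2.hasDerivAt_fderiv_fst (hf : Smooth2 f) (t s : ℝ) :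
    HasDerivAt (fun τ => f τ s) (fderiv ℝ (fun p : ℝ × ℝ => f p.1 p.2) (t, s) (1, 0)) t := by
  have hpath : HasDerivAt (fun τ : ℝ => (τ, s)) ((1 : ℝ), (0 : ℝ)) t :=
    (hasDerivAt_id t).prodMk (hasDerivAt_const t s)
  exact (hf.differentiable (by simp) (t, s)).hasFDerivAt.comp_hasDerivAt t hpath

theorem Smooth2.hasDerivAt_fderiv_snd (hf : Smooth2 f) (t s : ℝ) :
    HasDerivAt (fun σ => f t σ) (fderiv ℝ (fun p : ℝ × ℝ => f p.1 p.2) (t, s) (0, 1)) s := by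
  have hpath : HasDerivAt (fun σ : ℝ => (t, σ)) ((0 : ℝ), (1 : ℝ)) s :=
    (hasDerivAt_const s t).prodMk (hasDerivAt_id s)
  exact (hf.differentiable (by simp) (t, s)).hasFDerivAt.comp_hasDerivAt s hpath

theorem Smooth2.hasDerivAt_pt (hf : Smooth2 f) (t s : ℝ) :
    HasDerivAt (fun τ => f τ s) (pt f t s) t := by
  simpa only [pt, (hf.hasDerivAt_fderiv_fst t s).deriv] using hf.hasDerivAt_fderiv_fst t s

theorem Smooth2.hasDerivAt_ps (hf : Smooth2 f) (t s : ℝ) :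
    HasDerivAt (fun σ => f t σ) (ps f t s) s := by
  simpa only [ps, (hf.hasDerivAt_fderiv_snd t s).deriv] using hf.hasDerivAt_fderiv_snd t s

theorem Smooth2.smooth2_pt (hf : Smooth2 f) : Smooth2 (pt f) := by
  have h : (fun p : ℝ × ℝ => pt f p.1 p.2)
      = fun p => fderiv ℝ (fun q : ℝ × ℝ => f q.1 q.2) p (1, 0) :=
    funext fun p => (hf.hasDerivAt_fderiv_fst p.1 p.2).deriv
  rw [Smooth2, h]
  exact (hf.fderiv_right le_rfl).clm_apply contDiff_const

theorem Smooth2.smooth2_ps (hf : Smooth2 f) : Smooth2 (ps f) := by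
  have h : (fun p : ℝ × ℝ => ps f p.1 p.2)
      = fun p => fderiv ℝ (fun q : ℝ × ℝ => f q.1 q.2) p (0, 1) :=
    funext fun p => (hf.hasDerivAt_fderiv_snd p.1 p.2).deriv
  rw [Smooth2, h]
  exact (hf.fderiv_right le_rfl).clm_apply contDiff_const

theorem apply_eq_zero_of_tsupport_subset {S : Set (ℝ × ℝ)}
    (hV : tsupport (fun q : ℝ × ℝ => V q.1 q.2) ⊆ S) {t s : ℝ} (h : (t, s) ∉ S) : V t s = 0 :=
  image_eq_zero_of_notMem_tsupport (f := fun q : ℝ × ℝ => V q.1 q.2) fun h' => h (hV h')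

theorem Smooth2.ps_eq_zero_of_notMem_tsupport (hV : Smooth2 V) {t s : ℝ}
    (h : (t, s) ∉ tsupport fun q : ℝ × ℝ => V q.1 q.2) : ps V t s = 0 := by
  rw [ps, (hV.hasDerivAt_fderiv_snd t s).deriv, fderiv_of_notMem_tsupport ℝ h]
  rfl

theorem pt_add_const_mul (hf : Smooth2 f) (hV : Smooth2 V) (ε : ℝ) :
    pt (fun t s => f t s + ε * V t s) = fun t s => pt f t s + ε * pt V t s :=
  funext₂ fun t s => ((hf.hasDerivAt_pt t s).add ((hV.hasDerivAt_pt t s).const_mul ε)).deriv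

theorem ps_add_const_mul (hf : Smooth2 f) (hV : Smooth2 V) (ε : ℝ) :
    ps (fun t s => f t s + ε * V t s) = fun t s => ps f t s + ε * ps V t s :=
  funext₂ fun t s => ((hf.hasDerivAt_ps t s).add ((hV.hasDerivAt_ps t s).const_mul ε)).deriv

section IteratedIntegral

variable {F G : ℝ → ℝ → ℝ} {a b c d : ℝ}

theorem integral_integral_add (hF : Continuous fun p : ℝ × ℝ => F p.1 p.2)
    (hG : Continuous fun p : ℝ × ℝ => G p.1 p.2) :
    ∫ t in a..b, ∫ s in c..d, (F t s + G t s)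
      = (∫ t in a..b, ∫ s in c..d, F t s) + ∫ t in a..b, ∫ s in c..d, G t s := by
  have hinner {H : ℝ → ℝ → ℝ} (hH : Continuous fun p : ℝ × ℝ => H p.1 p.2) (t : ℝ) :
      IntervalIntegrable (H t ·) volume c d :=
    (hH.comp (Continuous.prodMk_right t)).intervalIntegrable c d
  have houter {H : ℝ → ℝ → ℝ} (hH : Continuous fun p : ℝ × ℝ => H p.1 p.2) :
      IntervalIntegrable (fun t => ∫ s in c..d, H t s) volume a b :=
    intervalIntegral.continuous_parametric_intervalIntegral_of_continuous' hH c d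
      |>.intervalIntegrable a b
  simp_rw [intervalIntegral.integral_add (hinner hF _) (hinner hG _)]
  exact intervalIntegral.integral_add (houter hF) (houter hG)

theorem integral_integral_ps_eq_zero (hF : Smooth2 F) (hc : ∀ t, F t c = 0)
    (hd : ∀ t, F t d = 0) : ∫ t in a..b, ∫ s in c..d, ps F t s = 0 := by
  have hinner (t : ℝ) : ∫ s in c..d, ps F t s = 0 := by
    rw [intervalIntegral.integral_eq_sub_of_hasDerivAt (fun s _ => hF.hasDerivAt_ps t s)
      ((hF.smooth2_ps.continuous.comp (Continuous.prodMk_right t)).intervalIntegrable c d),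
      hc, hd, sub_zero]
  simp [hinner]

theorem integral_integral_pt_eq_zero (hF : Smooth2 F) (ha : ∀ s, F a s = 0)
    (hb : ∀ s, F b s = 0) : ∫ t in a..b, ∫ s in c..d, pt F t s = 0 := by
  have hinner (s : ℝ) : ∫ t in a..b, pt F t s = 0 := by
    rw [intervalIntegral.integral_eq_sub_of_hasDerivAt (fun t _ => hF.hasDerivAt_pt t s)
      ((hF.smooth2_pt.continuous.comp (Continuous.prodMk_left s)).intervalIntegrable a b),
      ha, hb, sub_zero]
  rw [intervalIntegral_intervalIntegral_swap (F := pt F) (hF.smooth2_pt.continuous.continuousOn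
    |>.integrableOn_compact (isCompact_uIcc.prod isCompact_uIcc) |>.mono_set
      (prod_mono uIoc_subset_uIcc uIoc_subset_uIcc))]
  simp [hinner]

theorem integral_integral_eq_of_eq_add_pt_add_ps {P Q : ℝ → ℝ → ℝ} (hP : Smooth2 P)
    (hQ : Smooth2 Q) (hPa : ∀ s, P a s = 0) (hPb : ∀ s, P b s = 0) (hQc : ∀ t, Q t c = 0)
    (hQd : ∀ t, Q t d = 0) (hG : Continuous fun p : ℝ × ℝ => G p.1 p.2)
    (hF : ∀ t s, F t s = G t s + pt P t s + ps Q t s) :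
    ∫ t in a..b, ∫ s in c..d, F t s = ∫ t in a..b, ∫ s in c..d, G t s := by
  have hPt := hP.smooth2_pt.continuous
  simp_rw [hF]
  rw [integral_integral_add (F := fun t s => G t s + pt P t s) (hG.add hPt)
      hQ.smooth2_ps.continuous, integral_integral_add hG hPt,
    integral_integral_pt_eq_zero hP hPa hPb, integral_integral_ps_eq_zero hQ hQc hQd,
    add_zero, add_zero]

theorem hasDerivAt_integral_integral_of_quadratic {Φ : ℝ → ℝ → ℝ → ℝ} {A B C : ℝ → ℝ → ℝ}
    (hA : Continuous fun p : ℝ × ℝ => A p.1 p.2) (hB : Continuous fun p : ℝ × ℝ => B p.1 p.2)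
    (hC : Continuous fun p : ℝ × ℝ => C p.1 p.2)
    (hΦ : ∀ ε t s, Φ ε t s = A t s + ε * B t s + ε ^ 2 * C t s) :
    HasDerivAt (fun ε => ∫ t in a..b, ∫ s in c..d, Φ ε t s)
      (∫ t in a..b, ∫ s in c..d, B t s) 0 := by
  have hexpand : (fun ε => ∫ t in a..b, ∫ s in c..d, Φ ε t s) = fun ε =>
      (∫ t in a..b, ∫ s in c..d, A t s) + ε * (∫ t in a..b, ∫ s in c..d, B t s)
        + ε ^ 2 * ∫ t in a..b, ∫ s in c..d, C t s := by
    funext ε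
    have hεB : Continuous fun p : ℝ × ℝ => ε * B p.1 p.2 := continuous_const.mul hB
    have hεC : Continuous fun p : ℝ × ℝ => ε ^ 2 * C p.1 p.2 := continuous_const.mul hC
    simp_rw [hΦ, integral_integral_add (F := fun t s => A t s + ε * B t s)
      (G := fun t s => ε ^ 2 * C t s) (hA.add hεB) hεC,
      integral_integral_add (G := fun t s => ε * B t s) hA hεB,
      intervalIntegral.integral_const_mul]
  rw [hexpand]
  exact (((hasDerivAt_id' 0).mul_const _).const_add _).fun_add
    ((hasDerivAt_pow 2 0).mul_const _) |>.congr_deriv (by simp)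

theorem integral_eq_integral_integral_of_support_subset {Ψ : ℝ × ℝ → ℝ} (hΨ : Continuous Ψ)
    (hab : a ≤ b) (hcd : c ≤ d) (hsupp : Function.support Ψ ⊆ Ioc a b ×ˢ Ioc c d) :
    ∫ p, Ψ p = ∫ t in a..b, ∫ s in c..d, Ψ (t, s) := by
  have hint : IntegrableOn Ψ (Ioc a b ×ˢ Ioc c d) (volume.prod volume) := by
    rw [← Measure.volume_eq_prod]
    exact hΨ.continuousOn.integrableOn_compact (isCompact_Icc.prod isCompact_Icc) |>.mono_set
      (prod_mono Ioc_subset_Icc_self Ioc_subset_Icc_self)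
  rw [← setIntegral_eq_integral_of_forall_compl_eq_zero fun p hp =>
      Function.notMem_support.1 fun h => hp (hsupp h),
    Measure.volume_eq_prod, setIntegral_prod _ hint, intervalIntegral.integral_of_le hab]
  simp_rw [intervalIntegral.integral_of_le hcd]

theorem eq_zero_of_integral_integral_mul_eq_zero (hF : Continuous fun p : ℝ × ℝ => F p.1 p.2)
    (hab : a ≤ b) (hcd : c ≤ d)
    (h : ∀ V : ℝ → ℝ → ℝ, Smooth2 V →
      tsupport (fun q : ℝ × ℝ => V q.1 q.2) ⊆ Ioo a b ×ˢ Ioo c d →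
      ∫ t in a..b, ∫ s in c..d, F t s * V t s = 0) :
    ∀ t ∈ Ioo a b, ∀ s ∈ Ioo c d, F t s = 0 := by
  have hU : IsOpen (Ioo a b ×ˢ Ioo c d) := isOpen_Ioo.prod isOpen_Ioo
  have hae := hU.ae_eq_zero_of_integral_contDiff_smul_eq_zero (μ := volume)
    (f := fun p : ℝ × ℝ => F p.1 p.2) (hF.locallyIntegrable.locallyIntegrableOn _)
    fun φ hφ _ hφU => by
      rw [integral_eq_integral_integral_of_support_subset
        (Ψ := fun p => φ p • F p.1 p.2) (hφ.continuous.smul hF) hab hcd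
        ((Function.support_smul_subset_left _ _).trans (subset_tsupport _) |>.trans
          (hφU.trans (prod_mono Ioo_subset_Ioc_self Ioo_subset_Ioc_self)))]
      simpa only [smul_eq_mul, mul_comm] using h (fun t s => φ (t, s)) hφ hφU
  have heq := Measure.eqOn_open_of_ae_eq ((ae_restrict_iff' hU.measurableSet).2 hae) hU
    hF.continuousOn continuousOn_const
  exact fun t ht s hs => heq (show (t, s) ∈ Ioo a b ×ˢ Ioo c d from ⟨ht, hs⟩)

end IteratedIntegral

noncomputable def rodLagNHVariation (ρ α β K : ℝ) (x y θ Vx Vy Vθ : ℝ → ℝ → ℝ) :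
    ℝ → ℝ → ℝ := fun t s =>
  ρ * (pt x t s * pt Vx t s + pt y t s * pt Vy t s) + α * (pt θ t s * pt Vθ t s)
    - β * (ps θ t s * ps Vθ t s)
    - K * (ps (ps x) t s * ps (ps Vx) t s + ps (ps y) t s * ps (ps Vy) t s)

noncomputable def rodForce (ρ K : ℝ) (f : ℝ → ℝ → ℝ) : ℝ → ℝ → ℝ := fun t s =>
  ρ * pt (pt f) t s + K * ps (ps (ps (ps f))) t s

noncomputable def rodTorque (α β : ℝ) (θ : ℝ → ℝ → ℝ) : ℝ → ℝ → ℝ := fun t s =>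
  α * pt (pt θ) t s - β * ps (ps θ) t s

noncomputable def rodNonholonomicResidual (ρ α β K R : ℝ) (x y θ : ℝ → ℝ → ℝ) :
    ℝ → ℝ → ℝ := fun t s =>
  rodTorque α β θ t s - R * (rodForce ρ K x t s * ps y t s - rodForce ρ K y t s * ps x t s)

section Rod

variable {ρ α β K : ℝ} {x y θ Vx Vy Vθ : ℝ → ℝ → ℝ} {a b c d : ℝ}

theorem Smooth2.smooth2_rodForce (hf : Smooth2 f) : Smooth2 (rodForce ρ K f) :=
  (contDiff_const.mul hf.smooth2_pt.smooth2_pt).add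
    (contDiff_const.mul hf.smooth2_ps.smooth2_ps.smooth2_ps.smooth2_ps)

theorem Smooth2.smooth2_rodTorque (hθ : Smooth2 θ) : Smooth2 (rodTorque α β θ) :=
  (contDiff_const.mul hθ.smooth2_pt.smooth2_pt).sub (contDiff_const.mul hθ.smooth2_ps.smooth2_ps)

theorem smooth2_rodNonholonomicResidual {R : ℝ} (hx : Smooth2 x) (hy : Smooth2 y)
    (hθ : Smooth2 θ) : Smooth2 (rodNonholonomicResidual ρ α β K R x y θ) :=
  hθ.smooth2_rodTorque.sub (contDiff_const.mul ((hx.smooth2_rodForce.mul hy.smooth2_ps).sub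
    (hy.smooth2_rodForce.mul hx.smooth2_ps)))

theorem continuous_rodLagNH (hx : Smooth2 x) (hy : Smooth2 y) (hθ : Smooth2 θ) :
    Continuous fun p : ℝ × ℝ => rodLagNH ρ α β K x y θ p.1 p.2 := by
  have := hx.smooth2_pt.continuous
  have := hy.smooth2_pt.continuous
  have := hθ.smooth2_pt.continuous
  have := hθ.smooth2_ps.continuous
  have := hx.smooth2_ps.smooth2_ps.continuous
  have := hy.smooth2_ps.smooth2_ps.continuous
  unfold rodLagNH
  fun_prop

theorem continuous_rodLagNHVariation (hx : Smooth2 x) (hy : Smooth2 y) (hθ : Smooth2 θ)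
    (hVx : Smooth2 Vx) (hVy : Smooth2 Vy) (hVθ : Smooth2 Vθ) :
    Continuous fun p : ℝ × ℝ => rodLagNHVariation ρ α β K x y θ Vx Vy Vθ p.1 p.2 := by
  have := hx.smooth2_pt.continuous
  have := hy.smooth2_pt.continuous
  have := hθ.smooth2_pt.continuous
  have := hθ.smooth2_ps.continuous
  have := hx.smooth2_ps.smooth2_ps.continuous
  have := hy.smooth2_ps.smooth2_ps.continuous
  have := hVx.smooth2_pt.continuous
  have := hVy.smooth2_pt.continuous
  have := hVθ.smooth2_pt.continuous
  have := hVθ.smooth2_ps.continuous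
  have := hVx.smooth2_ps.smooth2_ps.continuous
  have := hVy.smooth2_ps.smooth2_ps.continuous
  unfold rodLagNHVariation
  fun_prop

theorem rodLagNH_add_const_mul (hx : Smooth2 x) (hy : Smooth2 y) (hθ : Smooth2 θ)
    (hVx : Smooth2 Vx) (hVy : Smooth2 Vy) (hVθ : Smooth2 Vθ) (ε t s : ℝ) :
    rodLagNH ρ α β K (fun t' s' => x t' s' + ε * Vx t' s') (fun t' s' => y t' s' + ε * Vy t' s')
        (fun t' s' => θ t' s' + ε * Vθ t' s') t s
      = rodLagNH ρ α β K x y θ t s + ε * rodLagNHVariation ρ α β K x y θ Vx Vy Vθ t s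
        + ε ^ 2 * rodLagNH ρ α β K Vx Vy Vθ t s := by
  simp only [rodLagNH, rodLagNHVariation, pt_add_const_mul hx hVx, pt_add_const_mul hy hVy,
    pt_add_const_mul hθ hVθ, ps_add_const_mul hθ hVθ, ps_add_const_mul hx hVx,
    ps_add_const_mul hy hVy, ps_add_const_mul hx.smooth2_ps hVx.smooth2_ps,
    ps_add_const_mul hy.smooth2_ps hVy.smooth2_ps]
  ring

theorem hasDerivAt_rodAction (hx : Smooth2 x) (hy : Smooth2 y) (hθ : Smooth2 θ)
    (hVx : Smooth2 Vx) (hVy : Smooth2 Vy) (hVθ : Smooth2 Vθ) :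
    HasDerivAt (fun ε : ℝ => ∫ t in a..b, ∫ s in c..d,
        rodLagNH ρ α β K (fun t' s' => x t' s' + ε * Vx t' s')
          (fun t' s' => y t' s' + ε * Vy t' s') (fun t' s' => θ t' s' + ε * Vθ t' s') t s)
      (∫ t in a..b, ∫ s in c..d, rodLagNHVariation ρ α β K x y θ Vx Vy Vθ t s) 0 :=
  hasDerivAt_integral_integral_of_quadratic (continuous_rodLagNH hx hy hθ)
    (continuous_rodLagNHVariation hx hy hθ hVx hVy hVθ) (continuous_rodLagNH hVx hVy hVθ)
    (rodLagNH_add_const_mul hx hy hθ hVx hVy hVθ)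

theorem integral_integral_rodLagNHVariation (hx : Smooth2 x) (hy : Smooth2 y) (hθ : Smooth2 θ)
    (hVx : Smooth2 Vx) (hVy : Smooth2 Vy) (hVθ : Smooth2 Vθ)
    (hsx : tsupport (fun q : ℝ × ℝ => Vx q.1 q.2) ⊆ Ioo a b ×ˢ Ioo c d)
    (hsy : tsupport (fun q : ℝ × ℝ => Vy q.1 q.2) ⊆ Ioo a b ×ˢ Ioo c d)
    (hsθ : tsupport (fun q : ℝ × ℝ => Vθ q.1 q.2) ⊆ Ioo a b ×ˢ Ioo c d) :
    ∫ t in a..b, ∫ s in c..d, rodLagNHVariation ρ α β K x y θ Vx Vy Vθ t s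
      = -∫ t in a..b, ∫ s in c..d, (rodForce ρ K x t s * Vx t s + rodForce ρ K y t s * Vy t s
          + rodTorque α β θ t s * Vθ t s) := by
  have hvanish : ∀ t s, (t, s) ∉ Ioo a b ×ˢ Ioo c d →
      Vx t s = 0 ∧ Vy t s = 0 ∧ Vθ t s = 0 ∧ ps Vx t s = 0 ∧ ps Vy t s = 0 :=
    fun t s h => ⟨apply_eq_zero_of_tsupport_subset hsx h, apply_eq_zero_of_tsupport_subset hsy h,
      apply_eq_zero_of_tsupport_subset hsθ h,
      hVx.ps_eq_zero_of_notMem_tsupport fun h' => h (hsx h'),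
      hVy.ps_eq_zero_of_notMem_tsupport fun h' => h (hsy h')⟩
  set P : ℝ → ℝ → ℝ := fun t s =>
    ρ * (pt x t s * Vx t s + pt y t s * Vy t s) + α * (pt θ t s * Vθ t s)
  set Q : ℝ → ℝ → ℝ := fun t s => -β * (ps θ t s * Vθ t s)
    - K * (ps (ps x) t s * ps Vx t s - ps (ps (ps x)) t s * Vx t s
      + (ps (ps y) t s * ps Vy t s - ps (ps (ps y)) t s * Vy t s))
  have hP : Smooth2 P := (contDiff_const.mul ((hx.smooth2_pt.mul hVx).add
    (hy.smooth2_pt.mul hVy))).add (contDiff_const.mul (hθ.smooth2_pt.mul hVθ))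
  have hQ : Smooth2 Q := (contDiff_const.mul (hθ.smooth2_ps.mul hVθ)).sub (contDiff_const.mul
    (((hx.smooth2_ps.smooth2_ps.mul hVx.smooth2_ps).sub
      (hx.smooth2_ps.smooth2_ps.smooth2_ps.mul hVx)).add
    ((hy.smooth2_ps.smooth2_ps.mul hVy.smooth2_ps).sub
      (hy.smooth2_ps.smooth2_ps.smooth2_ps.mul hVy))))
  have hPt (t s : ℝ) : pt P t s = _ :=
    ((((hx.smooth2_pt.hasDerivAt_pt t s).mul (hVx.hasDerivAt_pt t s)).add
      ((hy.smooth2_pt.hasDerivAt_pt t s).mul (hVy.hasDerivAt_pt t s))).const_mul ρ).add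
      (((hθ.smooth2_pt.hasDerivAt_pt t s).mul (hVθ.hasDerivAt_pt t s)).const_mul α) |>.deriv
  have hQs (t s : ℝ) : ps Q t s = _ :=
    (((hθ.smooth2_ps.hasDerivAt_ps t s).mul (hVθ.hasDerivAt_ps t s)).const_mul (-β)).sub
      (((((hx.smooth2_ps.smooth2_ps.hasDerivAt_ps t s).mul (hVx.smooth2_ps.hasDerivAt_ps t s)).sub
        ((hx.smooth2_ps.smooth2_ps.smooth2_ps.hasDerivAt_ps t s).mul (hVx.hasDerivAt_ps t s))).add
       (((hy.smooth2_ps.smooth2_ps.hasDerivAt_ps t s).mul (hVy.smooth2_ps.hasDerivAt_ps t s)).sub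
        ((hy.smooth2_ps.smooth2_ps.smooth2_ps.hasDerivAt_ps t s).mul
          (hVy.hasDerivAt_ps t s)))).const_mul K) |>.deriv
  simp_rw [← intervalIntegral.integral_neg]
  refine integral_integral_eq_of_eq_add_pt_add_ps hP hQ
    (fun s => by obtain ⟨h1, h2, h3, -⟩ := hvanish a s (by simp); simp [P, h1, h2, h3])
    (fun s => by obtain ⟨h1, h2, h3, -⟩ := hvanish b s (by simp); simp [P, h1, h2, h3])
    (fun t => by obtain ⟨h1, h2, h3, h4, h5⟩ := hvanish t c (by simp); simp [Q, h1, h2, h3, h4, h5])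
    (fun t => by obtain ⟨h1, h2, h3, h4, h5⟩ := hvanish t d (by simp); simp [Q, h1, h2, h3, h4, h5])
    ?_ fun t s => ?_
  · exact (((hx.smooth2_rodForce.mul hVx).add (hy.smooth2_rodForce.mul hVy)).add
      (hθ.smooth2_rodTorque.mul hVθ)).continuous.neg
  · rw [hPt, hQs]
    simp only [rodLagNHVariation, rodForce, rodTorque]
    ring

theorem hasDerivAt_rodAction_of_admissible {R : ℝ} (hx : Smooth2 x) (hy : Smooth2 y)
    (hθ : Smooth2 θ) (hV : Smooth2 V)
    (hsupp : tsupport (fun q : ℝ × ℝ => V q.1 q.2) ⊆ Ioo a b ×ˢ Ioo c d) :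
    HasDerivAt (fun ε : ℝ => ∫ t in a..b, ∫ s in c..d,
        rodLagNH ρ α β K (fun t' s' => x t' s' + ε * (-R * ps y t' s' * V t' s'))
          (fun t' s' => y t' s' + ε * (R * ps x t' s' * V t' s'))
          (fun t' s' => θ t' s' + ε * V t' s') t s)
      (-∫ t in a..b, ∫ s in c..d, rodNonholonomicResidual ρ α β K R x y θ t s * V t s) 0 := by
  have hVx : Smooth2 fun t s => -R * ps y t s * V t s := (contDiff_const.mul hy.smooth2_ps).mul hV
  have hVy : Smooth2 fun t s => R * ps x t s * V t s := (contDiff_const.mul hx.smooth2_ps).mul hV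
  refine (hasDerivAt_rodAction hx hy hθ hVx hVy hV).congr_deriv ?_
  rw [integral_integral_rodLagNHVariation hx hy hθ hVx hVy hV
    (tsupport_mul_subset_right.trans hsupp) (tsupport_mul_subset_right.trans hsupp) hsupp]
  congr 1
  refine intervalIntegral.integral_congr fun t _ => intervalIntegral.integral_congr fun s _ => ?_
  simp only [rodNonholonomicResidual]
  ring

end Rod

theorem nonholonomic_rod_dAlembert_principle
    (ρ α β K R ℓ : ℝ) (hℓ : 0 < ℓ) (t₀ t₁ : ℝ) (ht : t₀ < t₁)
    (x y θ : ℝ → ℝ → ℝ) (hx : Smooth2 x) (hy : Smooth2 y) (hθ : Smooth2 θ) :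
    ((∀ Vx Vy Vθ : ℝ → ℝ → ℝ, Smooth2 Vx → Smooth2 Vy → Smooth2 Vθ →
        tsupport (fun q : ℝ × ℝ => Vx q.1 q.2) ⊆ Set.Ioo t₀ t₁ ×ˢ Set.Ioo (0 : ℝ) ℓ →
        tsupport (fun q : ℝ × ℝ => Vy q.1 q.2) ⊆ Set.Ioo t₀ t₁ ×ˢ Set.Ioo (0 : ℝ) ℓ →
        tsupport (fun q : ℝ × ℝ => Vθ q.1 q.2) ⊆ Set.Ioo t₀ t₁ ×ˢ Set.Ioo (0 : ℝ) ℓ →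
        (∀ t s : ℝ, Vx t s + R * ps y t s * Vθ t s = 0) →
        (∀ t s : ℝ, Vy t s - R * ps x t s * Vθ t s = 0) →
        HasDerivAt (fun ε : ℝ =>
          ∫ t in t₀..t₁, ∫ s in (0 : ℝ)..ℓ,
            rodLagNH ρ α β K
              (fun t' s' => x t' s' + ε * Vx t' s')
              (fun t' s' => y t' s' + ε * Vy t' s')
              (fun t' s' => θ t' s' + ε * Vθ t' s') t s) 0 0)
      ↔ (∃ lam mu : ℝ → ℝ → ℝ,
          ContDiffOn ℝ (⊤ : ℕ∞) (fun q : ℝ × ℝ => lam q.1 q.2)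
            (Set.Ioo t₀ t₁ ×ˢ Set.Ioo (0 : ℝ) ℓ) ∧
          ContDiffOn ℝ (⊤ : ℕ∞) (fun q : ℝ × ℝ => mu q.1 q.2)
            (Set.Ioo t₀ t₁ ×ˢ Set.Ioo (0 : ℝ) ℓ) ∧
          ∀ t ∈ Set.Ioo t₀ t₁, ∀ s ∈ Set.Ioo (0 : ℝ) ℓ,
            ρ * pt (pt x) t s + K * ps (ps (ps (ps x))) t s = lam t s ∧
            ρ * pt (pt y) t s + K * ps (ps (ps (ps y))) t s = mu t s ∧
            α * pt (pt θ) t s - β * ps (ps θ) t s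
              = R * (lam t s * ps y t s - mu t s * ps x t s))) := by
  constructor
  · intro hstat
    have hres0 := eq_zero_of_integral_integral_mul_eq_zero
      (smooth2_rodNonholonomicResidual (R := R) hx hy hθ).continuous ht.le hℓ.le
      fun V hV hsupp => neg_eq_zero.1 <|
        (hasDerivAt_rodAction_of_admissible hx hy hθ hV hsupp).unique <|
          hstat _ _ V ((contDiff_const.mul hy.smooth2_ps).mul hV)
            ((contDiff_const.mul hx.smooth2_ps).mul hV) hV
            (tsupport_mul_subset_right.trans hsupp) (tsupport_mul_subset_right.trans hsupp) hsupp
            (fun t s => by ring) (fun t s => by ring)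
    exact ⟨rodForce ρ K x, rodForce ρ K y, hx.smooth2_rodForce.contDiffOn,
      hy.smooth2_rodForce.contDiffOn, fun t ht s hs => ⟨rfl, rfl, sub_eq_zero.1 (hres0 t ht s hs)⟩⟩
  · rintro ⟨lam, mu, -, -, heq⟩ Vx Vy Vθ - - hVθ - - hsθ had1 had2
    obtain rfl : Vx = fun t s => -R * ps y t s * Vθ t s :=
      funext₂ fun t s => by linear_combination had1 t s
    obtain rfl : Vy = fun t s => R * ps x t s * Vθ t s :=
      funext₂ fun t s => by linear_combination had2 t s
    have hzero (t s : ℝ) : rodNonholonomicResidual ρ α β K R x y θ t s * Vθ t s = 0 := by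
      by_cases hts : (t, s) ∈ Set.Ioo t₀ t₁ ×ˢ Set.Ioo (0 : ℝ) ℓ
      · obtain ⟨h1, h2, h3⟩ := heq t hts.1 s hts.2
        simp only [rodNonholonomicResidual, rodForce, rodTorque, h1, h2, h3, sub_self, zero_mul]
      · rw [apply_eq_zero_of_tsupport_subset hsθ hts, mul_zero]
    simpa only [hzero, intervalIntegral.integral_zero, neg_zero] using
      hasDerivAt_rodAction_of_admissible (ρ := ρ) (α := α) (β := β) (K := K) (R := R)
        hx hy hθ hVθ hsθ
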